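/- For n even, n ≥ 4, and 3 ≤ t ≤ n−1, the perfect matching graph (disjoint union of n/2 edges) satisfies i_t = C(n/2, t)·2^t < C(n-1, t). -/

import Mathlib

/-!
An independent set of a disjoint union of cliques on `β`, indexed by `α`, takes at most one vertex
from each clique, so it is the graph of a function from a set `A ⊆ α` to `β`; counting by `A` gives
`C(|α|, t) |β|^t`.

For the inequality, passing from `t` to `t + 1` multiplies `C(m, t) 2^t` by `2(m - t)/(t + 1)` and
`C(k, t)` by `(k - t)/(t + 1)`, and `2(m - t) ≤ k - t` as soon as `2m ≤ k + 1`. So the strict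
inequality at `t = 3`, which for `m = a + 2` reads `4a(a + 2) < (2a + 1)(2a + 3)`, propagates to
every `t ≤ k`.
-/

/-- A finset of vertices is independent: no edge inside. -/
def SimpleGraph.IsIndepFinset {V : Type*} (G : SimpleGraph V) (s : Finset V) : Prop :=
  ∀ v ∈ s, ∀ w ∈ s, ¬ G.Adj v w

/-- `indepCount G t` = number of independent sets of size `t` in `G`. -/
noncomputable def indepCount {V : Type*} [Fintype V] (G : SimpleGraph V) (t : ℕ) : ℕ :=
  Nat.card {s : Finset V // s.card = t ∧ G.IsIndepFinset s}

/-- `indepTotal G` = total number of independent sets in `G` (including ∅). -/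
noncomputable def indepTotal {V : Type*} [Fintype V] (G : SimpleGraph V) : ℕ :=
  Nat.card {s : Finset V // G.IsIndepFinset s}

open Classical in
/-- The independence polynomial `P(G,x) = Σ_t i_t(G) xᵗ`. -/
noncomputable def indPoly {V : Type*} [Fintype V] (G : SimpleGraph V) (x : ℝ) : ℝ :=
  ∑ s ∈ Finset.univ.filter (fun s : Finset V => G.IsIndepFinset s), x ^ s.card

open Finset

theorem SimpleGraph.isIndepFinset_iff_injOn_fst {α β : Type*} {G : SimpleGraph (α × β)}
    (hG : ∀ u v, G.Adj u v ↔ u.1 = v.1 ∧ u ≠ v) (s : Finset (α × β)) :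
    G.IsIndepFinset s ↔ Set.InjOn Prod.fst (s : Set (α × β)) := by
  simp only [SimpleGraph.IsIndepFinset, hG, Set.InjOn, mem_coe, not_and, not_not]

section

variable {α β : Type*} [Fintype α] [Fintype β] [DecidableEq α]

theorem card_filter_injOn_fst_image_eq (A : Finset α) :
    #{s : Finset (α × β) | Set.InjOn Prod.fst (s : Set (α × β)) ∧ s.image Prod.fst = A} =
      Fintype.card β ^ #A := by
  classical
  rw [← Fintype.card_coe A, ← Fintype.card_fun, ← card_univ]
  symm
  refine card_nbij (fun f : A → β => univ.image fun a : A => ((a : α), f a)) ?_ ?_ ?_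
  · intro f _
    refine mem_filter.2 ⟨mem_univ _, ?_, by ext; simp⟩
    rintro _ h _ h' he
    obtain ⟨a, -, rfl⟩ := mem_image.1 h
    obtain ⟨a', -, rfl⟩ := mem_image.1 h'
    obtain rfl : a = a' := Subtype.ext he
    rfl
  · intro f _ g _ hfg
    simp only at hfg
    funext a
    have h : ((a : α), f a) ∈ univ.image fun a : A => ((a : α), g a) := by
      rw [← hfg]; exact mem_image_of_mem _ (mem_univ a)
    obtain ⟨a', _, ha'⟩ := mem_image.1 h
    obtain rfl : a' = a := Subtype.ext (congrArg Prod.fst ha')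
    exact (congrArg Prod.snd ha').symm
  · intro s hs
    simp only [coe_filter, mem_univ, true_and, Set.mem_ofPred_eq] at hs
    obtain ⟨hinj, rfl⟩ := hs
    have hex : ∀ a : s.image Prod.fst, ∃ b, ((a : α), b) ∈ s := fun a => by
      obtain ⟨p, hp, hpa⟩ := mem_image.1 a.2
      exact ⟨p.2, by rw [← hpa]; exact hp⟩
    choose f hf using hex
    refine ⟨f, mem_coe.2 (mem_univ f), ?_⟩
    ext p
    simp only [mem_image, mem_univ, true_and]
    constructor
    · rintro ⟨a, rfl⟩
      exact hf a
    · intro hp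
      exact ⟨⟨p.1, mem_image_of_mem _ hp⟩, hinj (hf _) hp rfl⟩

theorem card_filter_card_eq_injOn_fst (t : ℕ) :
    #{s : Finset (α × β) | #s = t ∧ Set.InjOn Prod.fst (s : Set (α × β))} =
      (Fintype.card α).choose t * Fintype.card β ^ t := by
  set S : Finset (Finset (α × β)) := {s | #s = t ∧ Set.InjOn Prod.fst (s : Set (α × β))}
  have hmaps : ∀ s ∈ S, s.image Prod.fst ∈ powersetCard t univ := fun s hs => by
    obtain ⟨hcard, hinj⟩ := (mem_filter.1 hs).2
    exact mem_powersetCard.2 ⟨subset_univ _, by rw [card_image_of_injOn hinj, hcard]⟩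
  have hfiber : ∀ A ∈ powersetCard t univ, #{s ∈ S | s.image Prod.fst = A} = Fintype.card β ^ t :=
    fun A hA => by
    obtain ⟨-, hAt⟩ := mem_powersetCard.1 hA
    rw [← hAt, ← card_filter_injOn_fst_image_eq A, filter_filter]
    congr 1
    refine filter_congr fun s _ => ⟨fun ⟨⟨_, h⟩, h'⟩ => ⟨h, h'⟩, fun ⟨h, h'⟩ => ⟨⟨?_, h⟩, h'⟩⟩
    rw [← hAt, ← h', card_image_of_injOn h]
  rw [card_eq_sum_card_fiberwise hmaps, sum_congr rfl hfiber, sum_const, card_powersetCard,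
    card_univ, smul_eq_mul]

end

theorem indepCount_eq_choose_mul_pow {α β : Type*} [Fintype α] [Fintype β]
    {G : SimpleGraph (α × β)}
    (hG : ∀ u v, G.Adj u v ↔ u.1 = v.1 ∧ u ≠ v) (t : ℕ) :
    indepCount G t = (Fintype.card α).choose t * Fintype.card β ^ t := by
  classical
  rw [indepCount, Nat.card_eq_fintype_card, Fintype.card_subtype]
  simp_rw [SimpleGraph.isIndepFinset_iff_injOn_fst hG]
  exact card_filter_card_eq_injOn_fst t

theorem Nat.choose_three_mul_two_pow_three_lt (a : ℕ) :
    (a + 2).choose 3 * 2 ^ 3 < (2 * a + 3).choose 3 := by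
  have h₁ := Nat.descFactorial_eq_factorial_mul_choose (a + 2) 3
  have h₂ := Nat.descFactorial_eq_factorial_mul_choose (2 * a + 3) 3
  norm_num [Nat.descFactorial, Nat.factorial] at h₁ h₂
  rw [show 2 * a + 3 - 2 = 2 * a + 1 by omega] at h₂
  nlinarith

theorem Nat.choose_mul_two_pow_lt_choose {m k t : ℕ} (hmk : 2 * m ≤ k + 1) (ht : 3 ≤ t)
    (htk : t ≤ k) : m.choose t * 2 ^ t < k.choose t := by
  induction t, ht using Nat.le_induction with
  | base =>
    rcases Nat.lt_or_ge m 2 with hm | hm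
    · rw [Nat.choose_eq_zero_of_lt (by omega), zero_mul]
      exact Nat.choose_pos htk
    · obtain ⟨a, rfl⟩ := Nat.exists_eq_add_of_le' hm
      exact (Nat.choose_three_mul_two_pow_three_lt a).trans_le (Nat.choose_le_choose 3 (by omega))
  | succ t _ ih =>
    refine Nat.lt_of_mul_lt_mul_right (a := t + 1) ?_
    calc m.choose (t + 1) * 2 ^ (t + 1) * (t + 1)
        = m.choose t * 2 ^ t * (2 * (m - t)) := by
          rw [mul_right_comm, Nat.choose_succ_right_eq]; ring
      _ ≤ m.choose t * 2 ^ t * (k - t) := Nat.mul_le_mul_left _ (by omega)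
      _ < k.choose t * (k - t) := Nat.mul_lt_mul_of_pos_right (ih (by omega)) (by omega)
      _ = k.choose (t + 1) * (t + 1) := (Nat.choose_succ_right_eq k t).symm

theorem perfect_matching_indep_count (n t : ℕ) (ht : 3 ≤ t) (ht' : t ≤ n - 1)
    (M : SimpleGraph (Fin (n / 2) × Bool))
    (hM : ∀ u v, M.Adj u v ↔ u.1 = v.1 ∧ u ≠ v) :
    indepCount M t = (n / 2).choose t * 2 ^ t ∧
      (n / 2).choose t * 2 ^ t < (n - 1).choose t := by
  refine ⟨by simpa using indepCount_eq_choose_mul_pow hM t, ?_⟩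
  exact Nat.choose_mul_two_pow_lt_choose (by omega) ht (by omega)
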